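/- Let M be an MSC over P and Σ, let p, q ∈ P, let π, π' ∈ Π_{p,q}, and let f ∈ E_q such that there is no event e with e → f. Then π ≼_f π' if and only if last_π(f) = ⊥ or f_{π, →*π'}(f) = f, where →*π' denotes the path expression consisting of the letter →* followed by π'. -/

import Mathlib

/-! Since `f` is the first event of process `q`, every `→*π'`-path from `g = last_π(f)` ends at or
above `f`, so `f_{π,→*π'}(f) = f` just says that `f` is reachable from `g` along `→*π'`. As `π` and
`π'` both start on `p`, this holds iff `g →* last_{π'}(f)`, i.e. iff `g ≤ last_{π'}(f)`. -/

namespace Gossip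

/-- Events extended with bottom and top elements. -/
inductive ExtEv (E : Type) : Type where
  | bot : ExtEv E
  | evt (e : E) : ExtEv E
  | top : ExtEv E

/-- A message sequence chart (MSC) over processes `P`, alphabet `A`,
with (finite, nonempty) set of events `E`. -/
structure MSC (P A E : Type) : Type where
  fintypeE : Fintype E
  nonemptyE : Nonempty E
  loc : E → P
  lab : E → A
  /-- process successor relation `→` -/
  next : E → E → Prop
  /-- message relation `◁` -/
  msg : E → E → Prop
  next_loc : ∀ {e f : E}, next e f → loc e = loc f
  next_irrefl : ∀ e : E, ¬ next e e
  next_right_unique : ∀ {e f f' : E}, next e f → next e f' → f = f'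
  next_left_unique : ∀ {e e' f : E}, next e f → next e' f → e = e'
  next_total : ∀ e f : E, loc e = loc f →
      Relation.ReflTransGen next e f ∨ Relation.ReflTransGen next f e
  msg_loc : ∀ {e f : E}, msg e f → loc e ≠ loc f
  /-- every event belongs to at most one pair of `◁` -/
  msg_unique : ∀ {e f e' f' : E}, msg e f → msg e' f' →
      (e = e' ∨ e = f' ∨ f = e' ∨ f = f') → e = e' ∧ f = f'
  fifo : ∀ {e f e' f' : E}, msg e f → msg e' f' → loc e = loc e' → loc f = loc f' →
      (Relation.ReflTransGen next e e' ↔ Relation.ReflTransGen next f f')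
  /-- `≤ = (→ ∪ ◁)*` is a partial order -/
  causal_antisymm : ∀ {e f : E},
      Relation.ReflTransGen (fun x y => next x y ∨ msg x y) e f →
      Relation.ReflTransGen (fun x y => next x y ∨ msg x y) f e → e = f

namespace MSC

variable {P A E B : Type}

/-- the causal order `≤ = (→ ∪ ◁)*` -/
def le (M : MSC P A E) : E → E → Prop :=
  Relation.ReflTransGen (fun x y => M.next x y ∨ M.msg x y)

/-- the strict causal order `<` -/
def lt (M : MSC P A E) (e f : E) : Prop := M.le e f ∧ e ≠ f

/-- `→*` -/
def nextStar (M : MSC P A E) : E → E → Prop := Relation.ReflTransGen M.next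

/-- the causal order extended to `E ∪ {⊥,⊤}` with `⊥ < e < ⊤` -/
def extLe (M : MSC P A E) : ExtEv E → ExtEv E → Prop
  | .bot, _ => True
  | _, .top => True
  | .evt e, .evt f => M.le e f
  | _, _ => False

def extLt (M : MSC P A E) (x y : ExtEv E) : Prop := M.extLe x y ∧ x ≠ y

/-- replace the labelling of an MSC (e.g. to pair it with an extra labelling) -/
def relabel (M : MSC P A E) (μ : E → B) : MSC P B E where
  fintypeE := M.fintypeE
  nonemptyE := M.nonemptyE
  loc := M.loc
  lab := μ
  next := M.next
  msg := M.msg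
  next_loc := M.next_loc
  next_irrefl := M.next_irrefl
  next_right_unique := M.next_right_unique
  next_left_unique := M.next_left_unique
  next_total := M.next_total
  msg_loc := M.msg_loc
  msg_unique := M.msg_unique
  fifo := M.fifo
  causal_antisymm := M.causal_antisymm

end MSC

/-- letters of path expressions: `→`, `→*`, `p▷q`, `⟨a⟩` -/
inductive PathLetter (P A : Type) : Type where
  | next : PathLetter P A
  | nextStar : PathLetter P A
  | msg (p q : P) : PathLetter P A
  | lab (a : A) : PathLetter P A

/-- path expressions: finite words over `Γ` -/
abbrev PathExpr (P A : Type) := List (PathLetter P A)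

variable {P A E : Type}

def letterSem (M : MSC P A E) : PathLetter P A → E → E → Prop
  | .next => M.next
  | .nextStar => M.nextStar
  | .msg p q => fun e f => M.loc e = p ∧ M.loc f = q ∧ M.msg e f
  | .lab a => fun e f => e = f ∧ M.lab e = a

/-- `⟦π⟧` -/
def pathSem (M : MSC P A E) : PathExpr P A → E → E → Prop
  | [] => fun e f => e = f
  | l :: π => fun e g => ∃ f, letterSem M l e f ∧ pathSem M π f g

def letterComp : PathLetter P A → P → P → Prop
  | .msg p q => fun x y => x = p ∧ y = q
  | _ => fun x y => x = y

/-- `Comp(π)`; `π ∈ Π_{p,q}` iff `pcomp π p q` -/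
def pcomp : PathExpr P A → P → P → Prop
  | [] => fun x y => x = y
  | l :: π => fun x z => ∃ y, letterComp l x y ∧ pcomp π y z

/-- `IsLast M π e x` holds iff `x = last_π(e)` (with `x = ⊥` iff no `π`-path into `e`). -/
def IsLast (M : MSC P A E) (π : PathExpr P A) (e : E) : ExtEv E → Prop
  | .bot => ∀ f, ¬ pathSem M π f e
  | .evt g => pathSem M π g e ∧ ∀ f, pathSem M π f e → M.le f g
  | .top => False

/-- `IsFirst M π e x` holds iff `x = first_π(e)` (with `x = ⊤` iff no `π`-path out of `e`). -/
def IsFirst (M : MSC P A E) (π : PathExpr P A) (e : E) : ExtEv E → Prop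
  | .top => ∀ f, ¬ pathSem M π e f
  | .evt g => pathSem M π e g ∧ ∀ f, pathSem M π e f → M.le g f
  | .bot => False

/-- `IsFa M π π' e x` holds iff `x = f_{π,π'}(e) = first_{π'}(last_π(e))`, with
`first_{π'}(⊥) := ⊥`. -/
def IsFa (M : MSC P A E) (π π' : PathExpr P A) (e : E) (x : ExtEv E) : Prop :=
  (IsLast M π e ExtEv.bot ∧ x = ExtEv.bot) ∨
    ∃ g, IsLast M π e (ExtEv.evt g) ∧ IsFirst M π' g x

/-- `IsLastProc M p e x` holds iff `x = last_p(e)`, the maximal event of process `p`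
strictly below `e` (`⊥` if none). -/
def IsLastProc (M : MSC P A E) (p : P) (e : E) : ExtEv E → Prop
  | .bot => ∀ f, M.loc f = p → ¬ M.lt f e
  | .evt g => M.loc g = p ∧ M.lt g e ∧ ∀ f, M.loc f = p → M.lt f e → M.le f g
  | .top => False

/-- `π ≼_e π'`, i.e. `last_π(e) ≤ last_{π'}(e)` -/
def ple (M : MSC P A E) (π π' : PathExpr P A) (e : E) : Prop :=
  ∃ x y, IsLast M π e x ∧ IsLast M π' e y ∧ M.extLe x y

def gossipSuffix : P → List P → PathExpr P A
  | _, [] => []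
  | p, q :: w => PathLetter.msg p q :: PathLetter.nextStar :: gossipSuffix q w

/-- `π_w` for `w = p :: rest` -/
def gossipExpr (p : P) (w : List P) : PathExpr P A :=
  match w with
  | [] => [PathLetter.next, PathLetter.nextStar]
  | _ :: _ => PathLetter.nextStar :: gossipSuffix p w

/-- `π ∈ Π^gossip` -/
def IsGossip (π : PathExpr P A) : Prop :=
  ∃ (p : P) (w : List P), (p :: w).Nodup ∧ π = gossipExpr p w

/-- actions of a CFM transition -/
inductive CAct (P A Msg : Type) : Type where
  | internal (a : A) : CAct P A Msg
  | send (a : A) (m : Msg) (q : P) : CAct P A Msg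
  | recv (a : A) (m : Msg) (q : P) : CAct P A Msg

def CAct.labelOf {P A Msg : Type} : CAct P A Msg → A
  | .internal a => a
  | .send a _ _ => a
  | .recv a _ _ => a

/-- a communicating finite-state machine over `P` and `A` -/
structure CFM (P A : Type) : Type 1 where
  Msg : Type
  msgFin : Fintype Msg
  S : Type
  sFin : Fintype S
  ι : P → S
  Δ : P → Set (S × CAct P A Msg × S)
  Acc : Set (P → S)
  wf_send : ∀ p s a m q s', (s, CAct.send a m q, s') ∈ Δ p → q ≠ p
  wf_recv : ∀ p s a m q s', (s, CAct.recv a m q, s') ∈ Δ p → q ≠ p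

namespace CFM

variable {P A E : Type}

/-- `ρ` is a run of the CFM `C` on the MSC `M` -/
def IsRun (C : CFM P A) (M : MSC P A E) (ρ : E → C.S × CAct P A C.Msg × C.S) : Prop :=
  (∀ e, ρ e ∈ C.Δ (M.loc e)) ∧
  (∀ e, ((ρ e).2.1).labelOf = M.lab e) ∧
  (∀ e, (¬ ∃ f, M.next f e) → (ρ e).1 = C.ι (M.loc e)) ∧
  (∀ e f, M.next e f → (ρ e).2.2 = (ρ f).1) ∧
  (∀ e, (¬ ∃ f, M.msg e f) → (¬ ∃ f, M.msg f e) → ∃ a, (ρ e).2.1 = CAct.internal a) ∧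
  (∀ e f, M.msg e f → ∃ m, (ρ e).2.1 = CAct.send (M.lab e) m (M.loc f) ∧
      (ρ f).2.1 = CAct.recv (M.lab f) m (M.loc e))

/-- the run `ρ` is accepting -/
def IsAccepting (C : CFM P A) (M : MSC P A E)
    (ρ : E → C.S × CAct P A C.Msg × C.S) : Prop :=
  ∃ s : P → C.S, s ∈ C.Acc ∧ ∀ p,
    ((∃ e, M.loc e = p) → ∃ e, M.loc e = p ∧ (¬ ∃ f, M.next e f) ∧ s p = (ρ e).2.2) ∧
    ((¬ ∃ e, M.loc e = p) → s p = C.ι p)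

/-- `M ∈ L(C)` -/
def Accepts (C : CFM P A) (M : MSC P A E) : Prop :=
  ∃ ρ, C.IsRun M ρ ∧ C.IsAccepting M ρ

/-- deterministic CFMs -/
def Deterministic (C : CFM P A) : Prop :=
  ∀ p s γ₁ s₁ γ₂ s₂, (s, γ₁, s₁) ∈ C.Δ p → (s, γ₂, s₂) ∈ C.Δ p →
    CAct.labelOf γ₁ = CAct.labelOf γ₂ →
    ((∀ a₁ a₂, γ₁ = CAct.internal a₁ → γ₂ = CAct.internal a₂ → s₁ = s₂) ∧
     (∀ a₁ m₁ a₂ m₂ q, γ₁ = CAct.send a₁ m₁ q → γ₂ = CAct.send a₂ m₂ q →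
        s₁ = s₂ ∧ m₁ = m₂) ∧
     (∀ a₁ a₂ m q, γ₁ = CAct.recv a₁ m q → γ₂ = CAct.recv a₂ m q → s₁ = s₂))

end CFM

/-- acceptance of the extended MSC `(M, ξ)` by a CFM over a product alphabet -/
def AcceptsExt {P A E Ξ : Type} (C : CFM P (A × Ξ)) (M : MSC P A E) (ξ : E → Ξ) : Prop :=
  C.Accepts (M.relabel fun e => (M.lab e, ξ e))

/-- apply `μ` to an extended event, sending both `⊥` and `⊤` to `none` -/
def extToOptMap {E Θ : Type} (μ : E → Θ) : ExtEv E → Option Θ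
  | .evt g => some (μ g)
  | _ => none

/-- apply `μ` to an extended event, preserving `⊥` and `⊤` -/
def extMap {E Θ : Type} (μ : E → Θ) : ExtEv E → ExtEv Θ
  | .bot => ExtEv.bot
  | .evt g => ExtEv.evt (μ g)
  | .top => ExtEv.top

/-- formulas of the temporal logic TL -/
inductive TL (P A : Type) : Type where
  | lab (a : A) : TL P A
  | proc (p : P) : TL P A
  | disj (φ ψ : TL P A) : TL P A
  | neg (φ : TL P A) : TL P A
  | co (φ : TL P A) : TL P A
  | tuntil (φ ψ : TL P A) : TL P A
  | tsince (φ ψ : TL P A) : TL P A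

/-- `M, e ⊨ φ` -/
def TLsat (M : MSC P A E) : TL P A → E → Prop
  | .lab a, e => M.lab e = a
  | .proc p, e => M.loc e = p
  | .disj φ ψ, e => TLsat M φ e ∨ TLsat M ψ e
  | .neg φ, e => ¬ TLsat M φ e
  | .co φ, e => ∃ f, ¬ M.le e f ∧ ¬ M.le f e ∧ TLsat M φ f
  | .tuntil φ ψ, e => ∃ f, M.lt e f ∧ TLsat M ψ f ∧ ∀ g, M.lt e g → M.lt g f → TLsat M φ g
  | .tsince φ ψ, e => ∃ f, M.lt f e ∧ TLsat M ψ f ∧ ∀ g, M.lt f g → M.lt g e → TLsat M φ g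

end Gossip

namespace Gossip

variable {P A E : Type}

namespace MSC

variable (M : MSC P A E)

theorem le_of_nextStar {e f : E} (h : M.nextStar e f) : M.le e f :=
  Relation.ReflTransGen.mono (fun _ _ h => Or.inl h) e f h

theorem loc_eq_of_nextStar {e f : E} (h : M.nextStar e f) : M.loc e = M.loc f := by
  induction h with
  | refl => rfl
  | tail _ h ih => exact ih.trans (M.next_loc h)

theorem nextStar_of_le {e f : E} (h : M.le e f) (hl : M.loc e = M.loc f) : M.nextStar e f := by
  rcases M.next_total e f hl with h' | h'
  · exact h'
  · exact M.causal_antisymm h (M.le_of_nextStar h') ▸ Relation.ReflTransGen.refl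

theorem le_iff_nextStar {e f : E} (hl : M.loc e = M.loc f) : M.le e f ↔ M.nextStar e f :=
  ⟨fun h => M.nextStar_of_le h hl, M.le_of_nextStar⟩

theorem le_of_not_next {f m : E} (hmin : ¬ ∃ e, M.next e f) (hl : M.loc f = M.loc m) :
    M.le f m := by
  rcases M.next_total f m hl with h | h
  · exact M.le_of_nextStar h
  · rcases h.cases_tail with rfl | ⟨c, _, hc⟩
    · exact Relation.ReflTransGen.refl
    · exact absurd ⟨c, hc⟩ hmin

end MSC

theorem pcomp_loc_of_pathSem (M : MSC P A E) (π : PathExpr P A) :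
    ∀ {e g : E}, pathSem M π e g → pcomp π (M.loc e) (M.loc g) := by
  induction π with
  | nil => rintro e g rfl; rfl
  | cons l π ih =>
    rintro e g ⟨m, hl, hp⟩
    refine ⟨M.loc m, ?_, ih hp⟩
    cases l with
    | next => exact M.next_loc hl
    | nextStar => exact M.loc_eq_of_nextStar hl
    | msg p q => exact ⟨hl.1, hl.2.1⟩
    | lab a => exact congrArg M.loc hl.1

theorem letterComp_left_unique {l : PathLetter P A} {a a' b : P}
    (h : letterComp l a b) (h' : letterComp l a' b) : a = a' := by
  cases l with
  | msg p q => exact h.1.trans h'.1.symm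
  | _ => exact h.trans h'.symm

theorem letterComp_right_unique {l : PathLetter P A} {a b b' : P}
    (h : letterComp l a b) (h' : letterComp l a b') : b = b' := by
  cases l with
  | msg p q => exact h.2.trans h'.2.symm
  | _ => exact h.symm.trans h'

theorem pcomp_left_unique (π : PathExpr P A) :
    ∀ {a a' b : P}, pcomp π a b → pcomp π a' b → a = a' := by
  induction π with
  | nil => intro a a' b h h'; exact h.trans h'.symm
  | cons l π ih =>
    rintro a a' b ⟨y, hl, hp⟩ ⟨y', hl', hp'⟩
    exact letterComp_left_unique hl (ih hp hp' ▸ hl')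

theorem pcomp_right_unique (π : PathExpr P A) :
    ∀ {a b b' : P}, pcomp π a b → pcomp π a b' → b = b' := by
  induction π with
  | nil => intro a b b' h h'; exact h.symm.trans h'
  | cons l π ih =>
    rintro a b b' ⟨y, hl, hp⟩ ⟨y', hl', hp'⟩
    exact ih hp (letterComp_right_unique hl hl' ▸ hp')

theorem loc_eq_of_pathSem_of_pcomp {M : MSC P A E} {π : PathExpr P A} {p q : P}
    (hπ : pcomp π p q) {g e : E} (hg : pathSem M π g e) (he : M.loc e = q) : M.loc g = p :=
  pcomp_left_unique π (he ▸ pcomp_loc_of_pathSem M π hg) hπ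

theorem IsLast.evt_unique {M : MSC P A E} {π : PathExpr P A} {e g g' : E}
    (h : IsLast M π e (.evt g)) (h' : IsLast M π e (.evt g')) : g = g' :=
  M.causal_antisymm (h'.2 g h.1) (h.2 g' h'.1)

theorem IsFa.isFirst_of_isLast {M : MSC P A E} {π π' : PathExpr P A} {e g : E} {z : ExtEv E}
    (hz : IsFa M π π' e z) (hg : IsLast M π e (.evt g)) : IsFirst M π' g z := by
  rcases hz with ⟨hbot, -⟩ | ⟨g', hg', hfirst⟩
  · exact absurd hg.1 (hbot g)
  · exact hg'.evt_unique hg ▸ hfirst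

theorem IsFirst.eq_evt_iff {M : MSC P A E} {ρ : PathExpr P A} {g f : E} {z : ExtEv E}
    (hz : IsFirst M ρ g z) (hleast : ∀ m, pathSem M ρ g m → M.le f m) :
    z = .evt f ↔ pathSem M ρ g f := by
  constructor
  · rintro rfl
    exact hz.1
  · intro hf
    cases z with
    | bot => exact hz.elim
    | evt m => exact congrArg ExtEv.evt (M.causal_antisymm (hz.2 f hf) (hleast m hz.1))
    | top => exact absurd hf (hz f)

theorem pathSem_nextStar_cons_iff_extLe {M : MSC P A E} {π' : PathExpr P A} {p q : P}
    (hπ' : pcomp π' p q) {f g : E} (hf : M.loc f = q) (hg : M.loc g = p) {x' : ExtEv E}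
    (hx' : IsLast M π' f x') :
    pathSem M (PathLetter.nextStar :: π') g f ↔ M.extLe (.evt g) x' := by
  cases x' with
  | bot => exact iff_of_false (fun ⟨g', _, hg'⟩ => hx' g' hg') id
  | top => exact hx'.elim
  | evt g' =>
    have hg' : M.loc g' = p := loc_eq_of_pathSem_of_pcomp hπ' hx'.1 hf
    rw [MSC.extLe, M.le_iff_nextStar (hg.trans hg'.symm)]
    constructor
    · rintro ⟨h, hgh, hh⟩
      have hh' : M.loc h = p := loc_eq_of_pathSem_of_pcomp hπ' hh hf
      exact hgh.trans (M.nextStar_of_le (hx'.2 h hh) (hh'.trans hg'.symm))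
    · exact fun hgg' => ⟨g', hgg', hx'.1⟩

end Gossip

open Gossip in
theorem stmt6_general {P A E : Type} (M : MSC P A E)
    (p q : P) (π π' : PathExpr P A)
    (hπ : pcomp π p q) (hπ' : pcomp π' p q)
    (f : E) (hf : M.loc f = q) (hmin : ¬ ∃ e, M.next e f)
    (x x' z : ExtEv E)
    (hx : IsLast M π f x) (hx' : IsLast M π' f x')
    (hz : IsFa M π (PathLetter.nextStar :: π') f z) :
    M.extLe x x' ↔ (x = ExtEv.bot ∨ z = ExtEv.evt f) := by
  cases x with
  | bot => exact iff_of_true trivial (Or.inl rfl)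
  | top => exact hx.elim
  | evt g =>
    have hg : M.loc g = p := loc_eq_of_pathSem_of_pcomp hπ hx.1 hf
    have hleast : ∀ m, pathSem M (PathLetter.nextStar :: π') g m → M.le f m := fun m hm =>
      M.le_of_not_next hmin <| hf.trans <|
        pcomp_right_unique (PathLetter.nextStar :: π') ⟨p, rfl, hπ'⟩
          (hg ▸ pcomp_loc_of_pathSem M _ hm)
    rw [(hz.isFirst_of_isLast hx).eq_evt_iff hleast,
      pathSem_nextStar_cons_iff_extLe hπ' hf hg hx']
    simp only [reduceCtorEq, false_or]

open Gossip in
/-- Lemma 3.1: if `f ∈ E_q` has no `→`-predecessor, then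
`π ≼_f π'` iff `last_π(f) = ⊥` or `f_{π, →*π'}(f) = f`. -/
theorem stmt6 {P A E : Type} [Fintype P] [Fintype A] (M : MSC P A E)
    (p q : P) (π π' : PathExpr P A)
    (hπ : pcomp π p q) (hπ' : pcomp π' p q)
    (f : E) (hf : M.loc f = q) (hmin : ¬ ∃ e, M.next e f)
    (x x' z : ExtEv E)
    (hx : IsLast M π f x) (hx' : IsLast M π' f x')
    (hz : IsFa M π (PathLetter.nextStar :: π') f z) :
    M.extLe x x' ↔ (x = ExtEv.bot ∨ z = ExtEv.evt f) :=
  stmt6_general M p q π π' hπ hπ' f hf hmin x x' z hx hx' hz
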